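/- For every a > 0, the limit of β₁(a,b) as b → 0⁺ exists and equals (π²/24)·a; in particular β₁ extends continuously to the boundary with β₁(a,0) = (1/4)·(π²/6)·a. -/

import Mathlib

open Real Filter

/-- The logarithmic mean `Λ(s,t)`. -/
noncomputable def logMean (s t : ℝ) : ℝ :=
  if s = t then s else (s - t) / (Real.log s - Real.log t)

/-- The harmonic-logarithmic mean `Λ_H(s,t) = st/Λ(s,t)`. -/
noncomputable def harmLogMean (s t : ℝ) : ℝ := s * t / logMean s t

/-- `α*₁(a,b,ξ) = ∫₀^ξ sinh(x) Λ_H(a e^{-x}, b e^{x}) dx`. -/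
noncomputable def alphaOne (a b ξ : ℝ) : ℝ :=
  ∫ x in (0:ℝ)..ξ, Real.sinh x * harmLogMean (a * Real.exp (-x)) (b * Real.exp x)

/-- `β₁(a,b) = α*₁(a, b, (1/2) log(a/b))`. -/
noncomputable def betaOne (a b : ℝ) : ℝ :=
  alphaOne a b ((1 / 2) * Real.log (a / b))

/-!
Put `L = log (a / b)` and `u = L - 2x`. Since `a e^{-x} / (b e^x) = eᵘ`, the integrand of `β₁(a,b)`
is `(a - b)/2 · u/(eᵘ - 1) - b u/2`, so `β₁(a,b) = (a - b)/4 · ∫₀^L u/(eᵘ - 1) du - b L²/8`.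
As `b → 0⁺`, `L → ∞` and `b L² = a L² e^{-L} → 0`, while expanding `u/(eᵘ - 1) = ∑ₙ u e^{-(n+1)u}`
and integrating termwise gives `∫₀^∞ u/(eᵘ - 1) du = ζ(2) = π²/6`.
-/

open MeasureTheory Set Topology

lemma integral_Ioi_mul_exp_neg_mul {r : ℝ} (hr : 0 < r) :
    ∫ u in Ioi 0, u * exp (-(r * u)) = 1 / r ^ 2 := by
  have h := integral_rpow_mul_exp_neg_mul_Ioi (a := 2) two_pos hr
  norm_num [Real.Gamma_two] at h
  simpa using h

lemma integrableOn_Ioi_mul_exp_neg_mul {r : ℝ} (hr : 0 < r) :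
    IntegrableOn (fun u ↦ u * exp (-(r * u))) (Ioi 0) :=
  .of_integral_ne_zero (by rw [integral_Ioi_mul_exp_neg_mul hr]; positivity)

lemma hasSum_mul_exp_neg_succ_mul {u : ℝ} (hu : 0 < u) :
    HasSum (fun n : ℕ ↦ u * exp (-((n + 1) * u))) (u / (exp u - 1)) := by
  have hq : exp (-u) < 1 := exp_lt_one_iff.mpr (neg_lt_zero.mpr hu)
  have h := (hasSum_geometric_of_lt_one (exp_pos _).le hq).mul_left (u * exp (-u))
  have hterm : (fun n : ℕ ↦ u * exp (-((n + 1) * u))) = fun n ↦ u * exp (-u) * exp (-u) ^ n := by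
    ext n
    rw [← exp_nat_mul, mul_assoc, ← exp_add]
    ring_nf
  have hsum : u / (exp u - 1) = u * exp (-u) * (1 - exp (-u))⁻¹ := by
    have : exp u - 1 ≠ 0 := (sub_pos.mpr (one_lt_exp_iff.mpr hu)).ne'
    rw [exp_neg]
    field_simp
  rwa [hterm, hsum]

theorem integral_Ioi_div_exp_sub_one : ∫ u in Ioi 0, u / (exp u - 1) = π ^ 2 / 6 := by
  have hF : ∀ n : ℕ, IntegrableOn (fun u ↦ u * exp (-((n + 1) * u))) (Ioi 0) := fun n ↦
    integrableOn_Ioi_mul_exp_neg_mul (by positivity)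
  have hval : ∀ n : ℕ, ∫ u in Ioi 0, u * exp (-((n + 1) * u)) = 1 / ((n : ℝ) + 1) ^ 2 :=
    fun n ↦ integral_Ioi_mul_exp_neg_mul (by positivity)
  have hzeta : HasSum (fun n : ℕ ↦ 1 / ((n : ℝ) + 1) ^ 2) (π ^ 2 / 6) := by
    simpa using (hasSum_nat_add_iff' 1).mpr hasSum_zeta_two
  have hnorm : ∀ n : ℕ, ∫ u in Ioi 0, ‖u * exp (-((n + 1) * u))‖ = 1 / ((n : ℝ) + 1) ^ 2 := by
    intro n
    rw [← hval n]
    refine setIntegral_congr_fun measurableSet_Ioi fun u (hu : 0 < u) ↦ ?_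
    exact Real.norm_of_nonneg (by positivity)
  have h := hasSum_integral_of_summable_integral_norm hF
    (by simpa only [hnorm] using hzeta.summable)
  simp only [hval] at h
  rw [← h.unique hzeta]
  exact setIntegral_congr_fun measurableSet_Ioi fun u hu ↦
    (hasSum_mul_exp_neg_succ_mul hu).tsum_eq.symm

lemma harmLogMean_of_ne {s t : ℝ} (h : s ≠ t) :
    harmLogMean s t = s * t * (log s - log t) / (s - t) := by
  rw [harmLogMean, logMean, if_neg h, div_div_eq_mul_div]

lemma sinh_mul_harmLogMean {a b x : ℝ} (ha : 0 < a) (hb : 0 < b)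
    (hx : log (a / b) - 2 * x ≠ 0) :
    sinh x * harmLogMean (a * exp (-x)) (b * exp x) =
      (a - b) / 2 * ((log (a / b) - 2 * x) / (exp (log (a / b) - 2 * x) - 1))
        - b * (log (a / b) - 2 * x) / 2 := by
  set u := log (a / b) - 2 * x
  have hexp : exp u = a * exp (-x) / (b * exp x) := by
    rw [exp_sub, exp_log (div_pos ha hb), exp_neg, two_mul, exp_add]
    field_simp
  have hlog : log (a * exp (-x)) - log (b * exp x) = u := by
    rw [← log_div (by positivity) (by positivity), ← hexp, log_exp]
  have hne : a * exp (-x) ≠ b * exp x := by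
    intro h
    rw [h, div_self (by positivity), ← exp_zero] at hexp
    exact hx (exp_injective hexp)
  have hden : a - exp x ^ 2 * b ≠ 0 := by
    rw [exp_neg, ← div_eq_mul_inv, Ne, div_eq_iff (exp_ne_zero x)] at hne
    rw [sub_ne_zero, sq, mul_comm, ← mul_assoc]
    exact hne
  rw [harmLogMean_of_ne hne, hlog, hexp, sinh_eq, exp_neg]
  field_simp
  ring

lemma integrableOn_Ioi_div_exp_sub_one : IntegrableOn (fun u ↦ u / (exp u - 1)) (Ioi 0) :=
  .of_integral_ne_zero (by rw [integral_Ioi_div_exp_sub_one]; positivity)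

lemma betaOne_eq_integral_div_exp_sub_one {a b : ℝ} (ha : 0 < a) (hb : 0 < b) (hba : b ≤ a) :
    betaOne a b = (a - b) / 4 * (∫ u in (0 : ℝ)..log (a / b), u / (exp u - 1))
      - b * log (a / b) ^ 2 / 8 := by
  set L := log (a / b)
  have hL : 0 ≤ L := log_nonneg ((one_le_div hb).mpr hba)
  set G : ℝ → ℝ := fun u ↦ (a - b) / 2 * (u / (exp u - 1)) - b * u / 2
  have hsubst : betaOne a b = ∫ x in (0 : ℝ)..(1 / 2) * L, G (L - 2 * x) := by
    refine intervalIntegral.integral_congr_ae ?_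
    filter_upwards [Measure.ae_ne volume ((1 / 2) * L)] with x hx _
    exact sinh_mul_harmLogMean ha hb (fun h ↦ hx (by linarith))
  have hf : IntervalIntegrable (fun u ↦ u / (exp u - 1)) volume 0 L :=
    (intervalIntegrable_iff_integrableOn_Ioc_of_le hL).mpr
      (integrableOn_Ioi_div_exp_sub_one.mono_set Ioc_subset_Ioi_self)
  rw [hsubst, intervalIntegral.integral_comp_sub_mul G two_ne_zero,
    show L - 2 * (1 / 2 * L) = 0 by ring, mul_zero, sub_zero]
  simp only [G]
  rw [intervalIntegral.integral_sub (hf.const_mul _)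
      ((by fun_prop : Continuous fun u : ℝ ↦ b * u / 2).intervalIntegrable 0 L),
    intervalIntegral.integral_const_mul, intervalIntegral.integral_div,
    intervalIntegral.integral_const_mul, integral_id]
  simp only [smul_eq_mul]
  ring

lemma tendsto_log_const_div_nhdsGT_zero {a : ℝ} (ha : 0 < a) :
    Tendsto (fun b ↦ log (a / b)) (𝓝[>] 0) atTop :=
  tendsto_log_atTop.comp (tendsto_inv_nhdsGT_zero.const_mul_atTop ha)

lemma tendsto_mul_log_const_div_sq_nhdsGT_zero {a : ℝ} (ha : 0 < a) :
    Tendsto (fun b ↦ b * log (a / b) ^ 2) (𝓝[>] 0) (𝓝 0) := by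
  have h := ((tendsto_pow_mul_exp_neg_atTop_nhds_zero 2).comp
    (tendsto_log_const_div_nhdsGT_zero ha)).const_mul a
  rw [mul_zero] at h
  refine h.congr' ?_
  filter_upwards [self_mem_nhdsWithin] with b (hb : 0 < b)
  rw [Function.comp_apply, exp_neg, exp_log (div_pos ha hb)]
  field_simp

/-- As `b → 0⁺`, `β₁(a,b) → (π²/24) a = (1/4)(π²/6) a`. -/
theorem betaOne_tendsto_boundary (a : ℝ) (ha : 0 < a) :
    Tendsto (fun b : ℝ => betaOne a b) (nhdsWithin 0 (Set.Ioi 0))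
      (nhds (Real.pi ^ 2 / 24 * a)) ∧
    Real.pi ^ 2 / 24 * a = 1 / 4 * (Real.pi ^ 2 / 6) * a := by
  refine ⟨?_, by ring⟩
  have hcoef : Tendsto (fun b : ℝ ↦ (a - b) / 4) (𝓝[>] 0) (𝓝 (a / 4)) := by
    simpa using (((continuous_sub_left a).div_const 4).tendsto 0).mono_left nhdsWithin_le_nhds
  have hintegral : Tendsto (fun b ↦ ∫ u in (0 : ℝ)..log (a / b), u / (exp u - 1)) (𝓝[>] 0)
      (𝓝 (π ^ 2 / 6)) :=
    integral_Ioi_div_exp_sub_one ▸ intervalIntegral_tendsto_integral_Ioi 0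
      integrableOn_Ioi_div_exp_sub_one (tendsto_log_const_div_nhdsGT_zero ha)
  have hlim := (hcoef.mul hintegral).sub
    ((tendsto_mul_log_const_div_sq_nhdsGT_zero ha).div_const 8)
  rw [show π ^ 2 / 24 * a = a / 4 * (π ^ 2 / 6) - 0 / 8 by ring]
  refine hlim.congr' ?_
  filter_upwards [Ioo_mem_nhdsGT ha] with b hb
  exact (betaOne_eq_integral_div_exp_sub_one ha hb.1 hb.2.le).symm
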